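/- Let σ_0, σ_1, …, σ_T be a sequence of schedules in which each step from σ_t to σ_{t+1} is an improving k-swap of type-1. Suppose that at step t the swap uses critical machine i, machine i', and sets A, B, where i' is the machine with the ℓ-th smallest load among all m machines under σ_t. Then at no later step t' with t < t' < T does the swap use the same pair of sets (A, B) (A taken from the critical machine and B taken from the other machine) with the other machine being the machine with the ℓ-th smallest load among all m machines under σ_{t'}. -/

import Mathlib

open Finset

/-- The load of machine `i` under schedule `σ` with processing times `p`. -/
noncomputable def load {n m : ℕ} (p : Fin n → ℝ) (σ : Fin n → Fin m) (i : Fin m) : ℝ :=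
  ∑ j ∈ Finset.univ.filter (fun j => σ j = i), p j

/-- The makespan (maximum machine load) of schedule `σ`. -/
noncomputable def Lmax {n m : ℕ} (p : Fin n → ℝ) (σ : Fin n → Fin m) : ℝ :=
  ⨆ i, load p σ i

/-- `δ_min`: the minimum of `|p(A) - p(B)|` over disjoint finsets of jobs `A`, `B`
with `1 ≤ |A| + |B| ≤ k`. -/
noncomputable def deltaMin (n k : ℕ) (p : Fin n → ℝ) : ℝ :=
  sInf { x | ∃ A B : Finset (Fin n), Disjoint A B ∧ 1 ≤ A.card + B.card ∧
    A.card + B.card ≤ k ∧ x = |∑ j ∈ A, p j - ∑ j ∈ B, p j| }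

/-- An improving `k`-swap from `σ` to `σ'`, with critical machine `i`, machine `i' ≠ i`,
and disjoint job sets `A ⊆ σ⁻¹ {i}`, `B ⊆ σ⁻¹ {i'}` with `|A| ≥ 1`, `|A| + |B| ≤ k` and
`0 < p(A) - p(B) < L_i(σ) - L_{i'}(σ)`; `σ'` sends `A` to `i'`, `B` to `i`, and agrees
with `σ` elsewhere. -/
def IsImprovingKSwap (k : ℕ) {n m : ℕ} (p : Fin n → ℝ) (σ σ' : Fin n → Fin m)
    (i i' : Fin m) (A B : Finset (Fin n)) : Prop :=
  load p σ i = Lmax p σ ∧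
  i' ≠ i ∧
  Disjoint A B ∧
  (∀ j ∈ A, σ j = i) ∧ (∀ j ∈ B, σ j = i') ∧
  1 ≤ A.card ∧ A.card + B.card ≤ k ∧
  0 < (∑ j ∈ A, p j) - ∑ j ∈ B, p j ∧
  (∑ j ∈ A, p j) - (∑ j ∈ B, p j) < load p σ i - load p σ i' ∧
  (∀ j ∈ A, σ' j = i') ∧ (∀ j ∈ B, σ' j = i) ∧
  ∀ j, j ∉ A → j ∉ B → σ' j = σ j

/-- The set `γ_s(σ)` of machines whose load is at most `L_max(σ) - δ_min`. -/
noncomputable def gammaS (k : ℕ) {n m : ℕ} (p : Fin n → ℝ) (σ : Fin n → Fin m) :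
    Finset (Fin m) :=
  Finset.univ.filter (fun i => load p σ i ≤ Lmax p σ - deltaMin n k p)

/-- The potential `Φ(σ) = ∑_{(i,i')} |L_i(σ) - L_{i'}(σ)|` over ordered pairs of machines. -/
noncomputable def potential {n m : ℕ} (p : Fin n → ℝ) (σ : Fin n → Fin m) : ℝ :=
  ∑ i : Fin m, ∑ i' : Fin m, |load p σ i - load p σ i'|


/-- The (0-indexed) rank of machine `i` under schedule `σ`: its position when machines are
sorted by nondecreasing load, ties broken by the fixed ordering of the machine indices.
Machine `i` is the (1-indexed) `ℓ`-th smallest load machine iff `rank p σ i + 1 = ℓ`. -/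
noncomputable def rank {n m : ℕ} (p : Fin n → ℝ) (σ : Fin n → Fin m) (i : Fin m) : ℕ :=
  (Finset.univ.filter (fun j => load p σ j < load p σ i ∨
    (load p σ j = load p σ i ∧ j < i))).card

/-!
Write `d = p(A) - p(B)`, `r` for the rank of `i'` at step `t`, and `δ = δ_min ≤ d`. Along
improving swaps the makespan never increases, and for a threshold `τ` at most the new load of
the receiving machine the number of machines with load below `τ` does not increase: only the
critical machine can drop below `τ`, and it stays above the old load of the receiving machine.
Type-1 swaps keep the receiving machine above `L_max - δ`, so every threshold `≤ L_max - δ`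
qualifies. Hence from step `t + 1` on, either at most `r` machines have load below `L_max - d`,
or `A` sits together on a machine `h ∈ γ_l` and at most `r` machines have load below `L_h - d`
(right after step `t`, `h = i'` and `L_h - d` is the old load of `i'`). The second alternative
survives a swap because a receiving machine starts in `γ_s`, so `h` can only be touched as the
critical machine, where `L_h = L_max`. Repeating the swap would move `A` off a critical machine
onto the machine of rank `r`, whose load is below `L_max - d`, so `r + 1` machines would lie
below that threshold.
-/

section

variable {n m k : ℕ} {p : Fin n → ℝ}

noncomputable def numLoadLT (p : Fin n → ℝ) (σ : Fin n → Fin m) (τ : ℝ) : ℕ :=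
  #{x | load p σ x < τ}

theorem numLoadLT_mono (σ : Fin n → Fin m) : Monotone (numLoadLT p σ) := fun _ _ h =>
  card_le_card fun x hx => by
    simp only [mem_filter, mem_univ, true_and] at hx ⊢
    linarith

theorem rank_lt_numLoadLT {σ : Fin n → Fin m} {g : Fin m} {τ : ℝ} (hg : load p σ g < τ) :
    rank p σ g < numLoadLT p σ τ := by
  refine card_lt_card ((ssubset_iff_of_subset fun x hx => ?_).2 ⟨g, ?_, ?_⟩)
  · simp only [mem_filter, mem_univ, true_and] at hx ⊢
    rcases hx with hx | ⟨hx, -⟩ <;> linarith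
  · simpa using hg
  · simp

theorem load_le_Lmax (p : Fin n → ℝ) (σ : Fin n → Fin m) (x : Fin m) : load p σ x ≤ Lmax p σ :=
  le_ciSup (Set.finite_range _).bddAbove x

theorem lt_load_of_notMem_gammaS {σ : Fin n → Fin m} {x : Fin m} (hx : x ∉ gammaS k p σ) :
    Lmax p σ - deltaMin n k p < load p σ x := by
  simpa [gammaS] using hx

theorem deltaMin_le_abs {A B : Finset (Fin n)} (hAB : Disjoint A B) (h1 : 1 ≤ #A + #B)
    (hk : #A + #B ≤ k) : deltaMin n k p ≤ |∑ j ∈ A, p j - ∑ j ∈ B, p j| :=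
  csInf_le ⟨0, by rintro _ ⟨_, _, _, _, _, rfl⟩; exact abs_nonneg _⟩ ⟨A, B, hAB, h1, hk, rfl⟩

theorem load_eq_sum_ite (σ : Fin n → Fin m) (x : Fin m) :
    load p σ x = ∑ j, if σ j = x then p j else 0 :=
  sum_filter _ _

theorem load_of_swapSets {σ σ' : Fin n → Fin m} {i i' : Fin m} {A B : Finset (Fin n)}
    (hAB : Disjoint A B) (hA : ∀ j ∈ A, σ j = i) (hB : ∀ j ∈ B, σ j = i')
    (hA' : ∀ j ∈ A, σ' j = i') (hB' : ∀ j ∈ B, σ' j = i)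
    (hrest : ∀ j, j ∉ A → j ∉ B → σ' j = σ j) (x : Fin m) :
    load p σ' x = load p σ x +
      ((if i' = x then 1 else 0) - (if i = x then 1 else 0)) * (∑ j ∈ A, p j - ∑ j ∈ B, p j) := by
  set c : ℝ := (if i' = x then 1 else 0) - (if i = x then 1 else 0)
  have hdiff : load p σ' x - load p σ x =
      ∑ j ∈ A ∪ B, ((if σ' j = x then p j else 0) - if σ j = x then p j else 0) := by
    rw [load_eq_sum_ite, load_eq_sum_ite, ← sum_sub_distrib]
    refine (sum_subset (subset_univ _) fun j _ hj => ?_).symm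
    rw [mem_union, not_or] at hj
    rw [hrest j hj.1 hj.2, sub_self]
  have hsumA : ∑ j ∈ A, ((if σ' j = x then p j else 0) - if σ j = x then p j else 0) =
      c * ∑ j ∈ A, p j := by
    rw [mul_sum]
    refine sum_congr rfl fun j hj => ?_
    rw [hA j hj, hA' j hj]
    split_ifs <;> simp [c, *]
  have hsumB : ∑ j ∈ B, ((if σ' j = x then p j else 0) - if σ j = x then p j else 0) =
      -c * ∑ j ∈ B, p j := by
    rw [mul_sum]
    refine sum_congr rfl fun j hj => ?_
    rw [hB j hj, hB' j hj]
    split_ifs <;> simp [c, *]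
  rw [sum_union hAB, hsumA, hsumB] at hdiff
  linarith

def BlocksRepeat (p : Fin n → ℝ) (δ : ℝ) (S : Finset (Fin n)) (d : ℝ) (r : ℕ)
    (σ : Fin n → Fin m) : Prop :=
  numLoadLT p σ (Lmax p σ - d) ≤ r ∨
    ∃ h, (∀ j ∈ S, σ j = h) ∧ Lmax p σ - δ < load p σ h ∧ numLoadLT p σ (load p σ h - d) ≤ r

namespace IsImprovingKSwap

variable {σ σ' : Fin n → Fin m} {i i' : Fin m} {A B : Finset (Fin n)}

theorem critical (hsw : IsImprovingKSwap k p σ σ' i i' A B) : load p σ i = Lmax p σ := hsw.1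

theorem gap_pos (hsw : IsImprovingKSwap k p σ σ' i i' A B) :
    0 < ∑ j ∈ A, p j - ∑ j ∈ B, p j :=
  hsw.2.2.2.2.2.2.2.1

theorem gap_lt (hsw : IsImprovingKSwap k p σ σ' i i' A B) :
    ∑ j ∈ A, p j - ∑ j ∈ B, p j < load p σ i - load p σ i' :=
  hsw.2.2.2.2.2.2.2.2.1

theorem load_eq (hsw : IsImprovingKSwap k p σ σ' i i' A B) (x : Fin m) :
    load p σ' x = load p σ x +
      ((if i' = x then 1 else 0) - (if i = x then 1 else 0)) * (∑ j ∈ A, p j - ∑ j ∈ B, p j) :=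
  let ⟨_, _, hAB, hA, hB, _, _, _, _, hA', hB', hrest⟩ := hsw
  load_of_swapSets hAB hA hB hA' hB' hrest x

theorem load_src (hsw : IsImprovingKSwap k p σ σ' i i' A B) :
    load p σ' i = load p σ i - (∑ j ∈ A, p j - ∑ j ∈ B, p j) := by
  rw [hsw.load_eq, if_neg hsw.2.1, if_pos rfl]
  ring

theorem load_dst (hsw : IsImprovingKSwap k p σ σ' i i' A B) :
    load p σ' i' = load p σ i' + (∑ j ∈ A, p j - ∑ j ∈ B, p j) := by
  rw [hsw.load_eq, if_pos rfl, if_neg hsw.2.1.symm]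
  ring

theorem load_of_ne (hsw : IsImprovingKSwap k p σ σ' i i' A B) {x : Fin m} (hi : x ≠ i)
    (hi' : x ≠ i') : load p σ' x = load p σ x := by
  rw [hsw.load_eq, if_neg hi'.symm, if_neg hi.symm]
  ring

theorem Lmax_le (hsw : IsImprovingKSwap k p σ σ' i i' A B) : Lmax p σ' ≤ Lmax p σ := by
  have : Nonempty (Fin m) := ⟨i⟩
  refine ciSup_le fun x => ?_
  rcases eq_or_ne x i with rfl | hi
  · rw [hsw.load_src, hsw.critical]
    linarith [hsw.gap_pos]
  rcases eq_or_ne x i' with rfl | hi'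
  · rw [hsw.load_dst, ← hsw.critical]
    linarith [hsw.gap_lt]
  rw [hsw.load_of_ne hi hi']
  exact load_le_Lmax p σ x

theorem deltaMin_le (hsw : IsImprovingKSwap k p σ σ' i i' A B) :
    deltaMin n k p ≤ ∑ j ∈ A, p j - ∑ j ∈ B, p j := by
  obtain ⟨-, -, hAB, -, -, hA, hk, hpos, -⟩ := hsw
  simpa [abs_of_pos hpos] using deltaMin_le_abs (p := p) hAB (by omega) hk

theorem numLoadLT_le (hsw : IsImprovingKSwap k p σ σ' i i' A B) {τ : ℝ}
    (hτ : τ ≤ load p σ' i') : numLoadLT p σ' τ ≤ numLoadLT p σ τ := by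
  have hlt : load p σ i' < load p σ' i := by
    rw [hsw.load_src]
    linarith [hsw.gap_lt]
  refine card_le_card_of_injOn (Equiv.swap i i') (fun x hx => ?_) (Equiv.injective _).injOn
  simp only [coe_filter, mem_univ, true_and, Set.mem_ofPred_eq] at hx ⊢
  rcases eq_or_ne x i' with rfl | hi'
  · linarith
  rcases eq_or_ne x i with rfl | hi
  · rw [Equiv.swap_apply_left]
    linarith
  rwa [Equiv.swap_apply_of_ne_of_ne hi hi', ← hsw.load_of_ne hi hi']

theorem blocksRepeat_start (hsw : IsImprovingKSwap k p σ σ' i i' A B) {δ : ℝ}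
    (htype1 : Lmax p σ' - δ < load p σ' i') :
    BlocksRepeat p δ A (∑ j ∈ A, p j - ∑ j ∈ B, p j) (rank p σ i') σ' := by
  have ⟨_, _, _, _, _, _, _, _, _, hA', _⟩ := hsw
  refine Or.inr ⟨i', hA', htype1, card_le_card fun x hx => ?_⟩
  simp only [hsw.load_dst, add_sub_cancel_right, mem_filter, mem_univ, true_and] at hx ⊢
  have hi' : x ≠ i' := by
    rintro rfl
    rw [hsw.load_dst] at hx
    linarith [hsw.gap_pos]
  have hi : x ≠ i := by
    rintro rfl
    rw [hsw.load_src] at hx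
    linarith [hsw.gap_lt]
  exact Or.inl (hsw.load_of_ne hi hi' ▸ hx)

theorem blocksRepeat (hsw : IsImprovingKSwap k p σ σ' i i' A B) {δ d : ℝ} {S : Finset (Fin n)}
    {r : ℕ} (hδd : δ ≤ d) (hδ : δ ≤ ∑ j ∈ A, p j - ∑ j ∈ B, p j)
    (htype1 : Lmax p σ' - δ < load p σ' i') (hblock : BlocksRepeat p δ S d r σ) :
    BlocksRepeat p δ S d r σ' := by
  have hcount : ∀ τ ≤ Lmax p σ' - δ, numLoadLT p σ' τ ≤ numLoadLT p σ τ :=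
    fun τ hτ => hsw.numLoadLT_le (by linarith)
  have of_Lmax (h : numLoadLT p σ (Lmax p σ - d) ≤ r) : BlocksRepeat p δ S d r σ' := by
    refine Or.inl ((hcount _ (by linarith)).trans (le_trans ?_ h))
    exact numLoadLT_mono σ (by linarith [hsw.Lmax_le])
  rcases hblock with h | ⟨h, hS, hnear, hcnt⟩
  · exact of_Lmax h
  rcases eq_or_ne h i with rfl | hi
  · exact of_Lmax (hsw.critical ▸ hcnt)
  rcases eq_or_ne h i' with rfl | hi'
  · linarith [hsw.gap_lt, hsw.critical]
  have ⟨_, _, _, hA, hB, _, _, _, _, _, _, hrest⟩ := hsw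
  refine Or.inr ⟨h, fun j hj => ?_, ?_, ?_⟩
  · rw [hrest j (fun hjA => hi ((hS j hj).symm.trans (hA j hjA)))
      (fun hjB => hi' ((hS j hj).symm.trans (hB j hjB)))]
    exact hS j hj
  · rw [hsw.load_of_ne hi hi']
    linarith [hsw.Lmax_le]
  · rw [hsw.load_of_ne hi hi']
    exact (hcount _ (by linarith [load_le_Lmax p σ' h, hsw.load_of_ne hi hi'])).trans hcnt

theorem rank_ne (hsw : IsImprovingKSwap k p σ σ' i i' A B) {δ : ℝ} {r : ℕ}
    (hblock : BlocksRepeat p δ A (∑ j ∈ A, p j - ∑ j ∈ B, p j) r σ) : rank p σ i' ≠ r := by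
  have ⟨_, _, _, hA, _, hcard, _⟩ := hsw
  have hcount : numLoadLT p σ (Lmax p σ - (∑ j ∈ A, p j - ∑ j ∈ B, p j)) ≤ r := by
    rcases hblock with h | ⟨h, hAh, -, hcnt⟩
    · exact h
    obtain ⟨j, hj⟩ := card_pos.1 hcard
    obtain rfl : h = i := (hAh j hj).symm.trans (hA j hj)
    rwa [hsw.critical] at hcnt
  have hlt : load p σ i' < Lmax p σ - (∑ j ∈ A, p j - ∑ j ∈ B, p j) := by
    linarith [hsw.gap_lt, hsw.critical]
  exact (rank_lt_numLoadLT hlt).trans_le hcount |>.ne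

end IsImprovingKSwap

end

theorem no_repeat_swap_type1_general {n m k : ℕ}
    (p : Fin n → ℝ)
    (T : ℕ) (σ : ℕ → Fin n → Fin m) (i i' : ℕ → Fin m)
    (A B : ℕ → Finset (Fin n))
    (hsteps : ∀ t < T, IsImprovingKSwap k p (σ t) (σ (t + 1)) (i t) (i' t) (A t) (B t) ∧
      i' t ∉ gammaS k p (σ (t + 1)))
    (t : ℕ) (ht : t < T) (ℓ : ℕ) (hℓ : rank p (σ t) (i' t) + 1 = ℓ) :
    ∀ t', t < t' → t' < T →
      ¬(A t' = A t ∧ B t' = B t ∧ rank p (σ t') (i' t') + 1 = ℓ) := by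
  rintro t' htt' ht'T ⟨hA, hB, hrank⟩
  obtain ⟨hsw, htype1⟩ := hsteps t ht
  have hblock : ∀ s, t + 1 ≤ s → s ≤ t' → BlocksRepeat p (deltaMin n k p) (A t)
      (∑ j ∈ A t, p j - ∑ j ∈ B t, p j) (rank p (σ t) (i' t)) (σ s) := by
    intro s hs
    induction s, hs using Nat.le_induction with
    | base => exact fun _ => hsw.blocksRepeat_start (lt_load_of_notMem_gammaS htype1)
    | succ s _ ih =>
      intro hst'
      obtain ⟨hsw_s, htype1_s⟩ := hsteps s (by omega)
      exact hsw_s.blocksRepeat hsw.deltaMin_le hsw_s.deltaMin_le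
        (lt_load_of_notMem_gammaS htype1_s) (ih (by omega))
  have hsw' := (hsteps t' ht'T).1
  rw [hA, hB] at hsw'
  exact hsw'.rank_ne (hblock t' htt' le_rfl) (by omega)

/-- In a sequence of consecutive improving `k`-swaps of type-1, if at step `t` the sets
`A t`, `B t` are swapped between a critical machine and the machine with the (1-indexed)
`ℓ`-th smallest load, then at no later step `t'` with `t < t' < T` is the same pair of
sets swapped between a critical machine and the machine with the `ℓ`-th smallest load. -/
theorem no_repeat_swap_type1 {n m k : ℕ} (hm : 2 ≤ m) (hk : 1 ≤ k)
    (p : Fin n → ℝ) (hp : ∀ j, 0 < p j) (hδ : 0 < deltaMin n k p)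
    (T : ℕ) (σ : ℕ → Fin n → Fin m) (i i' : ℕ → Fin m)
    (A B : ℕ → Finset (Fin n))
    (hsteps : ∀ t < T, IsImprovingKSwap k p (σ t) (σ (t + 1)) (i t) (i' t) (A t) (B t) ∧
      i' t ∉ gammaS k p (σ (t + 1)))
    (t : ℕ) (ht : t < T) (ℓ : ℕ) (hℓ : rank p (σ t) (i' t) + 1 = ℓ) :
    ∀ t', t < t' → t' < T →
      ¬(A t' = A t ∧ B t' = B t ∧ rank p (σ t') (i' t') + 1 = ℓ) :=
  no_repeat_swap_type1_general p T σ i i' A B hsteps t ht ℓ hℓ
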